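/- arXiv:2510.12402 — 9 statements merged into one kernel-verified Lean document; each statement's English description precedes it below -/
import Mathlib

section
/- Let 0 ≤ β₁ ≤ β₂ < 1 and ε > 0, and let m̂_t and v̂_t be the bias-corrected first and second moment estimates of Adam built from arbitrary vectors g₁, …, g_t ∈ ℝ^d (i.e., m_t = β₁m_{t−1} + (1−β₁)g_t, v_t = β₂v_{t−1} + (1−β₂)g_t ⊙ g_t with m₀ = v₀ = 0, m̂_t = m_t/(1−β₁^t), v̂_t = v_t/(1−β₂^t)). Then for every t ≥ 1, ‖ m̂_t / (√v̂_t + ε·1) ‖_∞ ≤ √((1−β₁)/(1−β₂)). -/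
/-!
Both Adam moments are exponential moving averages started at zero, whose weights
`(1 - β) β^(t-k)` sum to `1 - β^t`. Cauchy–Schwarz for these weights bounds `m_t²` by
`(1 - β₁^t)` times the `β₁`-average of the squared gradients, and since `β₁ ≤ β₂`, that average,
rescaled by `1 - β₁`, is dominated by `v_t` rescaled by `1 - β₂`. Hence
`m̂_t² ≤ (1 - β₁)/(1 - β₂) · v̂_t`, and adding `ε` to `√v̂_t` only helps.
-/

/-- The rotated second-order cone `{(a, P, A) | a² ≤ P A, 0 ≤ P, 0 ≤ A}` is closed under
addition. -/
theorem sq_add_le_mul_add_of_sq_le_mul {a b P Q A B : ℝ} (hP : 0 ≤ P) (hQ : 0 ≤ Q)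
    (hA : 0 ≤ A) (hB : 0 ≤ B) (ha : a ^ 2 ≤ P * A) (hb : b ^ 2 ≤ Q * B) :
    (a + b) ^ 2 ≤ (P + Q) * (A + B) := by
  have hcross : 2 * (a * b) ≤ P * B + Q * A := by
    refine le_of_abs_le (abs_le_of_sq_le_sq ?_ (by positivity))
    have : (a * b) ^ 2 ≤ (P * B) * (Q * A) := by
      rw [mul_pow]; nlinarith [mul_le_mul ha hb (sq_nonneg b) (by positivity)]
    nlinarith [sq_nonneg (P * B - Q * A)]
  nlinarith

noncomputable def expMovingAvg (β : ℝ) (x : ℕ → ℝ) : ℕ → ℝ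
  | 0 => 0
  | t + 1 => β * expMovingAvg β x t + (1 - β) * x (t + 1)

namespace expMovingAvg

variable {β β₁ β₂ : ℝ} {x : ℕ → ℝ}

theorem eq_of_recursion {u : ℕ → ℝ} (h0 : u 0 = 0)
    (hsucc : ∀ t, u (t + 1) = β * u t + (1 - β) * x (t + 1)) : u = expMovingAvg β x := by
  funext t
  induction t with
  | zero => exact h0
  | succ t ih => rw [hsucc, ih, expMovingAvg]

theorem nonneg (hβ0 : 0 ≤ β) (hβ1 : β ≤ 1) (hx : ∀ t, 0 ≤ x t) (t : ℕ) :
    0 ≤ expMovingAvg β x t := by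
  induction t with
  | zero => exact le_rfl
  | succ t ih =>
    rw [expMovingAvg]
    have := hx (t + 1)
    have : 0 ≤ 1 - β := by linarith
    positivity

/-- Cauchy–Schwarz (or Jensen) for the weights of the moving average, which sum to `1 - β^t`. -/
theorem sq_le_mul_expMovingAvg_sq (hβ0 : 0 ≤ β) (hβ1 : β ≤ 1) (t : ℕ) :
    expMovingAvg β x t ^ 2 ≤ (1 - β ^ t) * expMovingAvg β (fun s => x s ^ 2) t := by
  induction t with
  | zero => simp [expMovingAvg]
  | succ t ih =>
    have hq : 0 ≤ 1 - β := by linarith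
    have hP : 0 ≤ 1 - β ^ t := sub_nonneg.2 (pow_le_one₀ hβ0 hβ1)
    have hA := nonneg hβ0 hβ1 (fun s => sq_nonneg (x s)) t
    have hcone := sq_add_le_mul_add_of_sq_le_mul (mul_nonneg hβ0 hP) hq (mul_nonneg hβ0 hA)
      (mul_nonneg hq (sq_nonneg (x (t + 1))))
      (a := β * expMovingAvg β x t) (b := (1 - β) * x (t + 1))
      (by rw [mul_pow]; nlinarith [mul_le_mul_of_nonneg_left ih (sq_nonneg β)])
      (le_of_eq (by ring))
    simp only [expMovingAvg]
    convert hcone using 2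
    ring

theorem one_sub_mul_le_one_sub_mul (hβ₁ : 0 ≤ β₁) (hβ₁₂ : β₁ ≤ β₂) (hβ₂ : β₂ ≤ 1)
    (hx : ∀ t, 0 ≤ x t) (t : ℕ) :
    (1 - β₂) * expMovingAvg β₁ x t ≤ (1 - β₁) * expMovingAvg β₂ x t := by
  induction t with
  | zero => simp [expMovingAvg]
  | succ t ih =>
    have hv := mul_nonneg (sub_nonneg.2 (hβ₁₂.trans hβ₂)) (nonneg (hβ₁.trans hβ₁₂) hβ₂ hx t)
    simp only [expMovingAvg]
    nlinarith [mul_le_mul_of_nonneg_left ih hβ₁, mul_le_mul_of_nonneg_right hβ₁₂ hv]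

theorem sq_div_le_mul_expMovingAvg_sq_div (hβ₁ : 0 ≤ β₁) (hβ₁₂ : β₁ ≤ β₂) (hβ₂ : β₂ < 1)
    {t : ℕ} (ht : t ≠ 0) :
    (expMovingAvg β₁ x t / (1 - β₁ ^ t)) ^ 2 ≤
      (1 - β₁) / (1 - β₂) * (expMovingAvg β₂ (fun s => x s ^ 2) t / (1 - β₂ ^ t)) := by
  have hβ₁' : β₁ < 1 := hβ₁₂.trans_lt hβ₂
  have hP₁ : 0 < 1 - β₁ ^ t := sub_pos.2 (pow_lt_one₀ hβ₁ hβ₁' ht)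
  have hP₂ : 0 < 1 - β₂ ^ t := sub_pos.2 (pow_lt_one₀ (hβ₁.trans hβ₁₂) hβ₂ ht)
  have hP₂₁ : 1 - β₂ ^ t ≤ 1 - β₁ ^ t := sub_le_sub_left (pow_le_pow_left₀ hβ₁ hβ₁₂ t) 1
  have hsq : ∀ s, 0 ≤ x s ^ 2 := fun s => sq_nonneg (x s)
  have hv := nonneg (hβ₁.trans hβ₁₂) hβ₂.le hsq t
  have hw := one_sub_mul_le_one_sub_mul hβ₁ hβ₁₂ hβ₂.le hsq t
  have hC : 0 ≤ (1 - β₁) / (1 - β₂) := div_nonneg (by linarith) (by linarith)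
  calc (expMovingAvg β₁ x t / (1 - β₁ ^ t)) ^ 2
      ≤ expMovingAvg β₁ (fun s => x s ^ 2) t / (1 - β₁ ^ t) := by
        rw [div_pow, div_le_div_iff₀ (by positivity) hP₁, sq (1 - β₁ ^ t), ← mul_assoc]
        exact mul_le_mul_of_nonneg_right
          ((sq_le_mul_expMovingAvg_sq hβ₁ hβ₁'.le t).trans_eq (mul_comm _ _)) hP₁.le
    _ ≤ (1 - β₁) / (1 - β₂) * expMovingAvg β₂ (fun s => x s ^ 2) t / (1 - β₁ ^ t) := by
        gcongr
        rw [div_mul_eq_mul_div, le_div_iff₀ (by linarith)]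
        linarith
    _ ≤ (1 - β₁) / (1 - β₂) * (expMovingAvg β₂ (fun s => x s ^ 2) t / (1 - β₂ ^ t)) := by
        rw [mul_div_assoc]
        gcongr

end expMovingAvg

theorem abs_div_sqrt_add_le_sqrt {a b C ε : ℝ} (hC : 0 ≤ C) (hab : a ^ 2 ≤ C * b)
    (hε : 0 ≤ ε) : |a / (Real.sqrt b + ε)| ≤ Real.sqrt C := by
  have ha : |a| ≤ Real.sqrt C * Real.sqrt b := by
    rw [← Real.sqrt_mul hC]
    exact Real.abs_le_sqrt hab
  rw [abs_div, abs_of_nonneg (by positivity : 0 ≤ Real.sqrt b + ε)]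
  rcases (by positivity : 0 ≤ Real.sqrt b + ε).eq_or_lt with hD | hD
  · rw [← hD, div_zero]
    exact Real.sqrt_nonneg C
  · rw [div_le_iff₀ hD]
    nlinarith [Real.sqrt_nonneg C]

/-- the bias-corrected Adam update is bounded entrywise by
`√((1-β₁)/(1-β₂))` in the supremum norm. -/
theorem adam_update_sup_bound {d : ℕ} (β₁ β₂ ε : ℝ) (hβ₁ : 0 ≤ β₁) (hβ₁₂ : β₁ ≤ β₂)
    (hβ₂ : β₂ < 1) (hε : 0 < ε) (g : ℕ → Fin d → ℝ) (m v : ℕ → Fin d → ℝ)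
    (hm0 : ∀ i, m 0 i = 0) (hv0 : ∀ i, v 0 i = 0)
    (hm : ∀ t i, m (t + 1) i = β₁ * m t i + (1 - β₁) * g (t + 1) i)
    (hv : ∀ t i, v (t + 1) i = β₂ * v t i + (1 - β₂) * (g (t + 1) i) ^ 2) :
    ∀ t, 1 ≤ t → ∀ i,
      |(m t i / (1 - β₁ ^ t)) / (Real.sqrt (v t i / (1 - β₂ ^ t)) + ε)|
        ≤ Real.sqrt ((1 - β₁) / (1 - β₂)) := by
  intro t ht i
  have hm_eq : (fun s => m s i) = expMovingAvg β₁ (fun s => g s i) :=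
    expMovingAvg.eq_of_recursion (hm0 i) (fun s => hm s i)
  have hv_eq : (fun s => v s i) = expMovingAvg β₂ (fun s => g s i ^ 2) :=
    expMovingAvg.eq_of_recursion (hv0 i) (fun s => hv s i)
  rw [congrFun hm_eq t, congrFun hv_eq t]
  exact abs_div_sqrt_add_le_sqrt (div_nonneg (by linarith) (by linarith))
    (expMovingAvg.sq_div_le_mul_expMovingAvg_sq_div hβ₁ hβ₁₂ hβ₂ (by omega)) hε.le
end

section
/- Let 0 ≤ β₁ ≤ β₂ < 1, t ≥ 1, and let g₁, …, g_t be real numbers. Define m = ((1−β₁)/(1−β₁^t)) Σ_{k=1}^t β₁^{t−k} g_k and v = ((1−β₂)/(1−β₂^t)) Σ_{k=1}^t β₂^{t−k} g_k². Then m² ≤ ((1−β₁)/(1−β₂)) · ((1−β₂^t)/(1−β₁^t)) · v, and consequently m² ≤ ((1−β₁)/(1−β₂)) · v. -/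
/-- scalar Cauchy–Schwarz estimate at the heart of the bound on
Adam's normalized update. -/
theorem adam_scalar_moment_bound (β₁ β₂ : ℝ) (hβ₁ : 0 ≤ β₁) (hβ₁₂ : β₁ ≤ β₂) (hβ₂ : β₂ < 1)
    (t : ℕ) (ht : 1 ≤ t) (g : ℕ → ℝ) (m v : ℝ)
    (hm : m = ((1 - β₁) / (1 - β₁ ^ t)) * ∑ k ∈ Finset.Icc 1 t, β₁ ^ (t - k) * g k)
    (hv : v = ((1 - β₂) / (1 - β₂ ^ t)) * ∑ k ∈ Finset.Icc 1 t, β₂ ^ (t - k) * (g k) ^ 2) :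
    m ^ 2 ≤ ((1 - β₁) / (1 - β₂)) * ((1 - β₂ ^ t) / (1 - β₁ ^ t)) * v ∧
      m ^ 2 ≤ ((1 - β₁) / (1 - β₂)) * v := by
  have hβ₂0 : 0 ≤ β₂ := le_trans hβ₁ hβ₁₂
  have hb1 : β₁ < 1 := lt_of_le_of_lt hβ₁₂ hβ₂
  have ht0 : t ≠ 0 := by omega
  have h1t : 0 < 1 - β₁ ^ t := by
    have := pow_lt_one₀ hβ₁ hb1 ht0; linarith
  have h2t : 0 < 1 - β₂ ^ t := by
    have := pow_lt_one₀ hβ₂0 hβ₂ ht0; linarith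
  have h1 : (0:ℝ) < 1 - β₁ := by linarith
  have h2 : (0:ℝ) < 1 - β₂ := by linarith
  have ne1 : (1:ℝ) - β₁ ≠ 0 := ne_of_gt h1
  have ne2 : (1:ℝ) - β₂ ≠ 0 := ne_of_gt h2
  have ne1t : (1:ℝ) - β₁ ^ t ≠ 0 := ne_of_gt h1t
  have ne2t : (1:ℝ) - β₂ ^ t ≠ 0 := ne_of_gt h2t
  have hpow : β₁ ^ t ≤ β₂ ^ t := pow_le_pow_left₀ hβ₁ hβ₁₂ t
  set A := ∑ k ∈ Finset.Icc 1 t, β₁ ^ (t - k) * g k with hA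
  set B₂ := ∑ k ∈ Finset.Icc 1 t, β₂ ^ (t - k) * (g k) ^ 2 with hB₂def
  have hB₂ : 0 ≤ B₂ := Finset.sum_nonneg fun k _ => by positivity
  have hS : ∑ k ∈ Finset.Icc 1 t, β₁ ^ (t - k) = (1 - β₁ ^ t) / (1 - β₁) := by
    have : ∑ k ∈ Finset.Icc 1 t, β₁ ^ (t - k) = ∑ j ∈ Finset.range t, β₁ ^ j := by
      apply Finset.sum_nbij' (fun k => t - k) (fun j => t - j)
      · intro k hk; simp only [Finset.mem_Icc] at hk
        exact Finset.mem_range.mpr (by omega)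
      · intro j hj; simp only [Finset.mem_range] at hj
        exact Finset.mem_Icc.mpr ⟨by omega, by omega⟩
      · intro k hk; simp only [Finset.mem_Icc] at hk; omega
      · intro j hj; simp only [Finset.mem_range] at hj; omega
      · intro k _; rfl
    rw [this, geom_sum_eq (by linarith : β₁ ≠ 1),
      div_eq_div_iff (by linarith : β₁ - 1 ≠ 0) ne1]
    ring
  -- Cauchy–Schwarz: A^2 ≤ (∑ β₁^(t-k)) * (∑ β₁^(t-k) g k ^ 2)
  have hCS : A ^ 2 ≤ (∑ k ∈ Finset.Icc 1 t, β₁ ^ (t - k)) *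
      ∑ k ∈ Finset.Icc 1 t, β₁ ^ (t - k) * (g k) ^ 2 := by
    apply Finset.sum_sq_le_sum_mul_sum_of_sq_eq_mul
    · intro k _; positivity
    · intro k _; positivity
    · intro k _; ring
  have hmono : (∑ k ∈ Finset.Icc 1 t, β₁ ^ (t - k) * (g k) ^ 2) ≤ B₂ := by
    apply Finset.sum_le_sum
    intro k _
    have : β₁ ^ (t - k) ≤ β₂ ^ (t - k) := pow_le_pow_left₀ hβ₁ hβ₁₂ _
    nlinarith [sq_nonneg (g k)]
  have hS0 : 0 ≤ (1 - β₁ ^ t) / (1 - β₁) := div_nonneg h1t.le h1.le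
  have key : A ^ 2 ≤ (1 - β₁ ^ t) / (1 - β₁) * B₂ := by
    calc A ^ 2 ≤ _ := hCS
    _ ≤ (∑ k ∈ Finset.Icc 1 t, β₁ ^ (t - k)) * B₂ := by
        apply mul_le_mul_of_nonneg_left hmono
        rw [hS]; exact hS0
    _ = (1 - β₁ ^ t) / (1 - β₁) * B₂ := by rw [hS]
  have hfirst : m ^ 2 ≤ ((1 - β₁) / (1 - β₂)) * ((1 - β₂ ^ t) / (1 - β₁ ^ t)) * v := by
    rw [hm, hv]
    rw [mul_pow]
    have hrhs : ((1 - β₁) / (1 - β₂)) * ((1 - β₂ ^ t) / (1 - β₁ ^ t)) *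
        ((1 - β₂) / (1 - β₂ ^ t) * B₂) = (1 - β₁) / (1 - β₁ ^ t) * B₂ := by
      field_simp
    rw [hrhs]
    have hc : 0 < (1 - β₁) / (1 - β₁ ^ t) := div_pos h1 h1t
    have := mul_le_mul_of_nonneg_left key (le_of_lt (mul_pos hc hc))
    calc ((1 - β₁) / (1 - β₁ ^ t)) ^ 2 * A ^ 2
        ≤ ((1 - β₁) / (1 - β₁ ^ t)) * ((1 - β₁) / (1 - β₁ ^ t)) *
          ((1 - β₁ ^ t) / (1 - β₁) * B₂) := by rw [sq]; exact this
      _ = (1 - β₁) / (1 - β₁ ^ t) * B₂ := by field_simp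
  refine ⟨hfirst, ?_⟩
  have hv0 : 0 ≤ v := by rw [hv]; exact mul_nonneg (div_nonneg h2.le h2t.le) hB₂
  have hratio : (1 - β₂ ^ t) / (1 - β₁ ^ t) ≤ 1 := by
    rw [div_le_one h1t]; linarith
  have hc2 : 0 ≤ (1 - β₁) / (1 - β₂) := div_nonneg h1.le h2.le
  calc m ^ 2 ≤ _ := hfirst
    _ ≤ (1 - β₁) / (1 - β₂) * 1 * v := by
        apply mul_le_mul_of_nonneg_right _ hv0
        exact mul_le_mul_of_nonneg_left hratio hc2
    _ = (1 - β₁) / (1 - β₂) * v := by ring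
end

section
/- For all vectors g, m, x ∈ ℝ^d: −⟨g, 𝕀(m ⊙ x ≥ 0) ⊙ x⟩ ≤ ⟨|g|, 𝕀(m ⊙ g ≤ 0) ⊙ |x|⟩ − ‖(g ⊙ x)^+‖₁, where |·| denotes the entrywise absolute value, 𝕀(u ⊙ w ≥ 0) (resp. 𝕀(u ⊙ w ≤ 0)) is the entrywise indicator vector which is 1 in coordinate i if u_i w_i ≥ 0 (resp. u_i w_i ≤ 0) and 0 otherwise, (y)^+ := max(0, y) entrywise, ⟨·,·⟩ is the Euclidean inner product and ‖·‖₁ the ℓ₁ norm. -/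
/-- vector indicator inequality used in the discrete-time analysis. -/
theorem cwd_inner_indicator_bound {d : ℕ} (g m x : Fin d → ℝ) :
    -(∑ i, g i * ((if 0 ≤ m i * x i then (1 : ℝ) else 0) * x i))
      ≤ (∑ i, |g i| * ((if m i * g i ≤ 0 then (1 : ℝ) else 0) * |x i|))
        - ∑ i, max (g i * x i) 0 := by
  have h : ∀ i, -(g i * ((if 0 ≤ m i * x i then (1 : ℝ) else 0) * x i))
      ≤ |g i| * ((if m i * g i ≤ 0 then (1 : ℝ) else 0) * |x i|) - max (g i * x i) 0 := by
    intro i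
    have habs : |g i| * |x i| = |g i * x i| := (abs_mul _ _).symm
    have h1 := abs_nonneg (g i * x i)
    have h2 := le_abs_self (g i * x i)
    have h3 := neg_abs_le (g i * x i)
    split_ifs with hx hg hg
    · rcases le_or_gt (g i * x i) 0 with h4 | h4
      · rw [max_eq_right h4]; nlinarith
      · rw [max_eq_left h4.le]; nlinarith
    · -- 0 ≤ m i * x i, ¬ (m i * g i ≤ 0)
      push_neg at hg
      -- then g i * x i ≥ 0 : m,x same sign-ish and m,g same sign
      have hgx : 0 ≤ g i * x i := by
        nlinarith [mul_nonneg hg.le hx, mul_pos hg hg, sq_nonneg (g i)]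
      rw [max_eq_left hgx]; nlinarith
    · -- m i * x i < 0, m i * g i ≤ 0
      rcases le_or_gt (g i * x i) 0 with h4 | h4
      · rw [max_eq_right h4]; nlinarith
      · rw [max_eq_left h4.le]; nlinarith
    · push_neg at hx hg
      have hgx : g i * x i ≤ 0 := by nlinarith [mul_pos hg (neg_pos.2 hx), sq_nonneg (m i)]
      rw [max_eq_right hgx]; nlinarith
  calc -(∑ i, g i * ((if 0 ≤ m i * x i then (1 : ℝ) else 0) * x i))
      = ∑ i, -(g i * ((if 0 ≤ m i * x i then (1 : ℝ) else 0) * x i)) := by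
        rw [Finset.sum_neg_distrib]
    _ ≤ ∑ i, (|g i| * ((if m i * g i ≤ 0 then (1 : ℝ) else 0) * |x i|) - max (g i * x i) 0) :=
        Finset.sum_le_sum fun i _ => h i
    _ = _ := Finset.sum_sub_distrib _ _
end

section
/- For every vector g ∈ ℝ^d, every x ∈ ℝ^d, and every λ ≥ 0: ⟨g, −g − λ·𝕀(g ⊙ x ≥ 0) ⊙ x⟩ = −‖g‖₂² − λ‖(g ⊙ x)^+‖₁ ≤ 0. In particular, along the continuous-time dynamics ẋ = −∇f(x) − λ𝕀(∇f(x) ⊙ x ≥ 0) ⊙ x of SGD with cautious weight decay, the function H(x) = f(x) has derivative dH/dt = −‖∇f(x)‖₂² − λ‖(∇f(x) ⊙ x)^+‖₁ ≤ 0 whenever f is differentiable at x. -/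
theorem mul_neg_sub_ite_mul_eq (a b lam : ℝ) :
    a * (-a - lam * (if 0 ≤ a * b then (1 : ℝ) else 0) * b) = -a ^ 2 - lam * max (a * b) 0 := by
  split_ifs with h
  · rw [max_eq_left h]; ring
  · rw [max_eq_right (not_le.1 h).le]; ring

/-- descent identity for SGD with cautious weight decay; the derivative of
`H(x) = f(x)` along `ẋ = -∇f(x) - λ·𝕀(∇f(x)⊙x ≥ 0)⊙x` is
`-‖∇f(x)‖₂² - λ‖(∇f(x)⊙x)⁺‖₁ ≤ 0` (stated for an arbitrary vector `g`, in particular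
for `g = ∇f(x)`). -/
theorem sgd_cwd_lyapunov_derivative {d : ℕ} (g x : Fin d → ℝ) (lam : ℝ) (hlam : 0 ≤ lam) :
    (∑ i, g i * (-g i - lam * (if 0 ≤ g i * x i then (1 : ℝ) else 0) * x i))
        = -(∑ i, (g i) ^ 2) - lam * ∑ i, max (g i * x i) 0 ∧
      (∑ i, g i * (-g i - lam * (if 0 ≤ g i * x i then (1 : ℝ) else 0) * x i)) ≤ 0 := by
  have key : (∑ i, g i * (-g i - lam * (if 0 ≤ g i * x i then (1 : ℝ) else 0) * x i))
      = -(∑ i, (g i) ^ 2) - lam * ∑ i, max (g i * x i) 0 := by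
    simp only [mul_neg_sub_ite_mul_eq, Finset.sum_sub_distrib, Finset.sum_neg_distrib,
      Finset.mul_sum]
  refine ⟨key, key ▸ sub_nonpos.2 ?_⟩
  have sq_sum_nonneg : 0 ≤ ∑ i, g i ^ 2 := Finset.sum_nonneg fun i _ => sq_nonneg (g i)
  have pos_part_sum_nonneg : 0 ≤ ∑ i, max (g i * x i) 0 :=
    Finset.sum_nonneg fun i _ => le_max_right _ _
  exact (neg_nonpos.2 sq_sum_nonneg).trans (mul_nonneg hlam pos_part_sum_nonneg)
end

section
/- Let f : ℝ^d → ℝ be differentiable, let β > 0, λ ≥ 0, and let x, m ∈ ℝ^d. Write s := 𝕀(m ⊙ x ≥ 0). Then ⟨β∇f(x) + λ s ⊙ m, −m − λ s ⊙ x⟩ + ⟨m + λ s ⊙ x, β(∇f(x) − m)⟩ = −⟨λ s + β·1, m ⊙ m⟩ − λ(β + λ)‖(m ⊙ x)^+‖₁ ≤ 0. In particular, H(x, m) = β f(x) + (1/2)‖m‖₂² + λ‖(m ⊙ x)^+‖₁ is a Lyapunov function for the continuous-time dynamics ẋ = −m − λ𝕀(m ⊙ x ≥ 0) ⊙ x,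 ṁ = β(∇f(x) − m) of SGD with momentum and cautious weight decay. -/
/-!
The cautious mask `s = 𝕀(m ⊙ x ≥ 0)` is `0/1`-valued, so `s² = s` and `s · (m x) = (m x)⁺`.
Expanding the two inner products coordinatewise, the gradient terms `±β ∇f(x) m` and
`±λβ s ∇f(x) x` cancel, and the rest collapses to `-(λ s + β) m² - λ(β + λ)(m x)⁺`,
each of whose terms is nonpositive.
-/

open Finset

theorem ite_nonneg_one_zero_mul_eq_max {R : Type*} [MulZeroOneClass R] [LinearOrder R]
    (t : R) :
    (if 0 ≤ t then (1 : R) else 0) * t = max t 0 := by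
  split_ifs with h
  · rw [one_mul, max_eq_left h]
  · rw [zero_mul, max_eq_right (not_le.mp h).le]

theorem cautious_coord_identity {R : Type*} [CommRing R] [LinearOrder R] (β lam g x m s : R)
    (hs_idem : s * s = s) (hs_pos : s * (m * x) = max (m * x) 0) :
    (β * g + lam * s * m) * (-m - lam * s * x) + (m + lam * s * x) * (β * (g - m))
      = -((lam * s + β) * (m * m)) - lam * (β + lam) * max (m * x) 0 := by
  rw [← hs_pos]
  linear_combination (-lam ^ 2 * m * x) * hs_idem

theorem cautious_coord_dissipation_nonneg {R : Type*} [CommRing R] [LinearOrder R]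
    [IsStrictOrderedRing R] {β lam : R} (hβ : 0 ≤ β) (hlam : 0 ≤ lam)
    {s : R} (hs : 0 ≤ s) (m t : R) :
    0 ≤ (lam * s + β) * (m * m) + lam * (β + lam) * max t 0 := by
  have hmask : 0 ≤ lam * s + β := add_nonneg (mul_nonneg hlam hs) hβ
  exact add_nonneg (mul_nonneg hmask (mul_self_nonneg m))
    (mul_nonneg (mul_nonneg hlam (add_nonneg hβ hlam)) (le_max_right t 0))

theorem sgdm_cwd_lyapunov_derivative_general {d : ℕ}
    (grad : (Fin d → ℝ) → Fin d → ℝ)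
    (β lam : ℝ) (hβ : 0 < β) (hlam : 0 ≤ lam) (x m : Fin d → ℝ)
    (s : Fin d → ℝ) (hs : ∀ i, s i = if 0 ≤ m i * x i then (1 : ℝ) else 0) :
    (∑ i, (β * grad x i + lam * s i * m i) * (-(m i) - lam * s i * x i))
        + (∑ i, (m i + lam * s i * x i) * (β * (grad x i - m i)))
      = -(∑ i, (lam * s i + β) * (m i * m i))
          - lam * (β + lam) * (∑ i, max (m i * x i) 0) ∧
    -(∑ i, (lam * s i + β) * (m i * m i))
        - lam * (β + lam) * (∑ i, max (m i * x i) 0) ≤ 0 := by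
  have hcoord : ∀ i, (β * grad x i + lam * s i * m i) * (-(m i) - lam * s i * x i)
      + (m i + lam * s i * x i) * (β * (grad x i - m i))
      = -((lam * s i + β) * (m i * m i)) - lam * (β + lam) * max (m i * x i) 0 := fun i =>
    cautious_coord_identity _ _ _ _ _ _ (by rw [hs i]; simp)
      (by rw [hs i, ite_nonneg_one_zero_mul_eq_max])
  have hs_nonneg : ∀ i, 0 ≤ s i := fun i => by rw [hs i]; split_ifs <;> norm_num
  have hdissipation : 0 ≤ ∑ i, ((lam * s i + β) * (m i * m i)
      + lam * (β + lam) * max (m i * x i) 0) := sum_nonneg fun i _ =>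
    cautious_coord_dissipation_nonneg hβ.le hlam (hs_nonneg i) _ _
  rw [sum_add_distrib, ← mul_sum] at hdissipation
  refine ⟨?_, by linarith⟩
  rw [← sum_add_distrib, sum_congr rfl fun i _ => hcoord i, sum_sub_distrib,
    sum_neg_distrib, mul_sum]

/-- Lyapunov derivative identity for SGD with momentum and cautious weight
decay: along `ẋ = -m - λ s ⊙ x`, `ṁ = β(∇f(x) - m)` with `s = 𝕀(m ⊙ x ≥ 0)`, the
derivative of `H(x,m) = β f(x) + ½‖m‖₂² + λ‖(m ⊙ x)⁺‖₁` equals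
`-⟨λ s + β·1, m ⊙ m⟩ - λ(β+λ)‖(m ⊙ x)⁺‖₁ ≤ 0`. -/
theorem sgdm_cwd_lyapunov_derivative {d : ℕ} (f : (Fin d → ℝ) → ℝ)
    (grad : (Fin d → ℝ) → Fin d → ℝ)
    (hgrad : ∀ p, HasFDerivAt f
      (∑ i, grad p i • (ContinuousLinearMap.proj i : (Fin d → ℝ) →L[ℝ] ℝ)) p)
    (β lam : ℝ) (hβ : 0 < β) (hlam : 0 ≤ lam) (x m : Fin d → ℝ)
    (s : Fin d → ℝ) (hs : ∀ i, s i = if 0 ≤ m i * x i then (1 : ℝ) else 0) :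
    (∑ i, (β * grad x i + lam * s i * m i) * (-(m i) - lam * s i * x i))
        + (∑ i, (m i + lam * s i * x i) * (β * (grad x i - m i)))
      = -(∑ i, (lam * s i + β) * (m i * m i))
          - lam * (β + lam) * (∑ i, max (m i * x i) 0) ∧
    -(∑ i, (lam * s i + β) * (m i * m i))
        - lam * (β + lam) * (∑ i, max (m i * x i) 0) ≤ 0 :=
  sgdm_cwd_lyapunov_derivative_general grad β lam hβ hlam x m s hs
end

section
/- Let f : ℝ^d → ℝ be differentiable, let α, γ > 0, λ ≥ 0, and let x, m ∈ ℝ^d. Let k ∈ ℝ^d be any vector satisfying the coordinatewise sign condition k_i m_i ≥ 0 for all i (as holds for k = ∇K(m) when K is convex with sgn(∇K(m)) = sgn(m)). Write s := 𝕀(m ⊙ x ≤ 0). Then ⟨α∇f(x) − λ s ⊙ m, k − λ s ⊙ x⟩ + ⟨k − λ s ⊙ x, −α∇f(x) − γm⟩ = −⟨λ s + γ·1, k ⊙ m⟩ − λ(λ + γ)‖(−m ⊙ x)^+‖₁ ≤ 0. In particular, H(x, m) = α f(x) + K(m) + λ‖(−m ⊙ x)^+‖₁ is a Lyapunov function for the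 continuous-time Lion-K dynamics with cautious weight decay: ẋ = ∇K(m) − λ𝕀(m ⊙ x ≤ 0) ⊙ x, ṁ = −α∇f(x) − γm. -/
/-!
Coordinatewise, the gradient terms cancel between the two inner products, leaving
`-(λ s + γ) k m + λ (λ + γ) s² m x`. Since `s` is a `0/1` indicator, `s² = s` and `s · m x` is
exactly `-(-m x)⁺`; both resulting terms are nonpositive because `k m ≥ 0`.
-/

open Finset

lemma ite_nonpos_mul_self_eq_neg_max (a : ℝ) :
    (if a ≤ 0 then (1 : ℝ) else 0) * a = -max (-a) 0 := by
  split_ifs with h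
  · rw [max_eq_left (by linarith)]; ring
  · rw [max_eq_right (by linarith)]; ring

lemma cautious_lyapunov_derivative_coord (g k m x lam γ s : ℝ)
    (hs : s = if m * x ≤ 0 then (1 : ℝ) else 0) :
    (g - lam * s * m) * (k - lam * s * x) + (k - lam * s * x) * (-g - γ * m)
      = -((lam * s + γ) * (k * m)) - lam * (lam + γ) * max (-(m * x)) 0 := by
  have hss : s * s = s := by rw [hs]; split_ifs <;> norm_num
  have hsmx : s * (m * x) = -max (-(m * x)) 0 := hs ▸ ite_nonpos_mul_self_eq_neg_max _
  linear_combination (lam ^ 2 * (m * x)) * hss + lam * (lam + γ) * hsmx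

lemma cautious_lyapunov_derivative_sum {ι : Type*} [Fintype ι] (g k m x s : ι → ℝ)
    (lam γ : ℝ) (hs : ∀ i, s i = if m i * x i ≤ 0 then (1 : ℝ) else 0) :
    (∑ i, (g i - lam * s i * m i) * (k i - lam * s i * x i))
        + (∑ i, (k i - lam * s i * x i) * (-g i - γ * m i))
      = -(∑ i, (lam * s i + γ) * (k i * m i))
          - lam * (lam + γ) * (∑ i, max (-(m i * x i)) 0) := by
  rw [← sum_add_distrib,
    sum_congr rfl fun i _ => cautious_lyapunov_derivative_coord _ _ _ _ _ _ _ (hs i),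
    sum_sub_distrib, ← sum_neg_distrib, ← mul_sum]

lemma cautious_lyapunov_derivative_nonpos {ι : Type*} [Fintype ι] (k m x s : ι → ℝ)
    (lam γ : ℝ) (hlam : 0 ≤ lam) (hγ : 0 ≤ γ) (hk : ∀ i, 0 ≤ k i * m i) (hs : ∀ i, 0 ≤ s i) :
    -(∑ i, (lam * s i + γ) * (k i * m i))
        - lam * (lam + γ) * (∑ i, max (-(m i * x i)) 0) ≤ 0 := by
  have hkm : 0 ≤ ∑ i, (lam * s i + γ) * (k i * m i) :=
    sum_nonneg fun i _ => mul_nonneg (by have := hs i; positivity) (hk i)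
  have hpos : 0 ≤ ∑ i, max (-(m i * x i)) 0 := sum_nonneg fun i _ => le_max_right _ _
  have : 0 ≤ lam * (lam + γ) * ∑ i, max (-(m i * x i)) 0 := by positivity
  linarith

theorem lionk_cwd_lyapunov_derivative_general {d : ℕ}
    (grad : (Fin d → ℝ) → Fin d → ℝ)
    (α γ lam : ℝ) (hγ : 0 < γ) (hlam : 0 ≤ lam) (x m k : Fin d → ℝ)
    (hk : ∀ i, 0 ≤ k i * m i)
    (s : Fin d → ℝ) (hs : ∀ i, s i = if m i * x i ≤ 0 then (1 : ℝ) else 0) :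
    (∑ i, (α * grad x i - lam * s i * m i) * (k i - lam * s i * x i))
        + (∑ i, (k i - lam * s i * x i) * (-(α * grad x i) - γ * m i))
      = -(∑ i, (lam * s i + γ) * (k i * m i))
          - lam * (lam + γ) * (∑ i, max (-(m i * x i)) 0) ∧
    -(∑ i, (lam * s i + γ) * (k i * m i))
        - lam * (lam + γ) * (∑ i, max (-(m i * x i)) 0) ≤ 0 :=
  ⟨cautious_lyapunov_derivative_sum (fun i => α * grad x i) k m x s lam γ hs,
    cautious_lyapunov_derivative_nonpos k m x s lam γ hlam hγ.le hk
      fun i => by rw [hs i]; split_ifs <;> norm_num⟩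

/-- Lyapunov derivative identity for the continuous-time Lion-K dynamics
with cautious weight decay: with `s = 𝕀(m ⊙ x ≤ 0)` and any `k` with `kᵢmᵢ ≥ 0`
(e.g. `k = ∇K(m)`), the derivative of `H(x,m) = α f(x) + K(m) + λ‖(-m ⊙ x)⁺‖₁` equals
`-⟨λ s + γ·1, k ⊙ m⟩ - λ(λ+γ)‖(-m ⊙ x)⁺‖₁ ≤ 0`. -/
theorem lionk_cwd_lyapunov_derivative {d : ℕ} (f : (Fin d → ℝ) → ℝ)
    (grad : (Fin d → ℝ) → Fin d → ℝ)
    (hgrad : ∀ p, HasFDerivAt f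
      (∑ i, grad p i • (ContinuousLinearMap.proj i : (Fin d → ℝ) →L[ℝ] ℝ)) p)
    (α γ lam : ℝ) (hα : 0 < α) (hγ : 0 < γ) (hlam : 0 ≤ lam) (x m k : Fin d → ℝ)
    (hk : ∀ i, 0 ≤ k i * m i)
    (s : Fin d → ℝ) (hs : ∀ i, s i = if m i * x i ≤ 0 then (1 : ℝ) else 0) :
    (∑ i, (α * grad x i - lam * s i * m i) * (k i - lam * s i * x i))
        + (∑ i, (k i - lam * s i * x i) * (-(α * grad x i) - γ * m i))
      = -(∑ i, (lam * s i + γ) * (k i * m i))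
          - lam * (lam + γ) * (∑ i, max (-(m i * x i)) 0) ∧
    -(∑ i, (lam * s i + γ) * (k i * m i))
        - lam * (lam + γ) * (∑ i, max (-(m i * x i)) 0) ≤ 0 :=
  lionk_cwd_lyapunov_derivative_general grad α γ lam hγ hlam x m k hk s hs
end

section
/- Let α, γ be real numbers with 0 < γ ≤ 4α, and let t > 0. Then γ/4 − α − α/(2(e^{αt} − 1)) + γ/(4(e^{γt} − 1)) ≤ 0. -/
/-- The function `u ↦ (1 - exp (-u))/u` is antitone on `(0, ∞)`, in cleared form. -/
lemma aux_exp_mono (u v : ℝ) (hu : 0 < u) (huv : u ≤ v) :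
    u * (1 - Real.exp (-v)) ≤ v * (1 - Real.exp (-u)) := by
  have hc : 0 ≤ v - u := sub_nonneg.mpr huv
  have h1 : (-(v - u)) + 1 ≤ Real.exp (-(v - u)) := Real.add_one_le_exp _
  have h2 : u + 1 ≤ Real.exp u := Real.add_one_le_exp u
  have h3 : Real.exp (-v) = Real.exp (-u) * Real.exp (-(v - u)) := by
    rw [← Real.exp_add]; ring_nf
  have h4 : Real.exp (-u) * Real.exp u = 1 := by rw [← Real.exp_add]; simp
  have h5 : (0:ℝ) < Real.exp (-u) := Real.exp_pos _
  rw [h3]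
  have hB : 0 ≤ u * Real.exp (-u) * (Real.exp (-(v - u)) - 1 + (v - u)) :=
    mul_nonneg (mul_nonneg hu.le h5.le) (by linarith)
  have hA : Real.exp (-u) * (u + 1) ≤ 1 := by
    calc Real.exp (-u) * (u + 1) ≤ Real.exp (-u) * Real.exp u :=
          mul_le_mul_of_nonneg_left h2 h5.le
       _ = 1 := h4
  have hC : (v - u) * (Real.exp (-u) * (u + 1)) ≤ (v - u) * 1 :=
    mul_le_mul_of_nonneg_left hA hc
  nlinarith [hB, hC]

/-- key scalar time-dependent estimate for the Lyapunov function of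
continuous-time Adam with cautious weight decay. -/
theorem adam_lyapunov_scalar_inequality (α γ t : ℝ) (hγ : 0 < γ) (hγα : γ ≤ 4 * α)
    (ht : 0 < t) :
    γ / 4 - α - α / (2 * (Real.exp (α * t) - 1)) + γ / (4 * (Real.exp (γ * t) - 1)) ≤ 0 := by
  have hα : 0 < α := by linarith
  set a := Real.exp (α * t) with ha_def
  set g := Real.exp (γ * t) with hg_def
  have ha1 : 1 < a := by
    rw [ha_def, show (1:ℝ) = Real.exp 0 by simp]
    exact Real.exp_lt_exp.mpr (by positivity)
  have hg1 : 1 < g := by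
    rw [hg_def, show (1:ℝ) = Real.exp 0 by simp]
    exact Real.exp_lt_exp.mpr (by positivity)
  have ha0 : 0 < a := by linarith
  have hg0 : 0 < g := by linarith
  have hb : Real.exp (4 * α * t) = a ^ 4 := by
    rw [ha_def, ← Real.exp_nat_mul]
    norm_num; ring_nf
  have hb1 : 1 < a ^ 4 := one_lt_pow₀ ha1 (by norm_num)
  -- monotonicity step
  have h1 := aux_exp_mono (γ * t) (4 * α * t) (by positivity) (by nlinarith)
  rw [Real.exp_neg, Real.exp_neg, hb] at h1
  -- cancel t
  have h1' : γ * (1 - (a ^ 4)⁻¹) ≤ 4 * α * (1 - g⁻¹) := by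
    apply le_of_mul_le_mul_right _ ht
    nlinarith [h1]
  -- clear inverses
  have hkey : γ * g * (a ^ 4 - 1) ≤ 4 * α * a ^ 4 * (g - 1) := by
    have hane : a ≠ 0 := ne_of_gt ha0
    have hgne : g ≠ 0 := ne_of_gt hg0
    have hmul := mul_le_mul_of_nonneg_right h1' (by positivity : (0:ℝ) ≤ a ^ 4 * g)
    have eL : γ * (1 - (a ^ 4)⁻¹) * (a ^ 4 * g) = γ * g * (a ^ 4 - 1) := by
      field_simp
    have eR : 4 * α * (1 - g⁻¹) * (a ^ 4 * g) = 4 * α * a ^ 4 * (g - 1) := by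
      field_simp
    linarith [hmul, eL, eR]
  have hpow : 2 * (a - 1) ≤ a ^ 4 - 1 := by nlinarith [sq_nonneg (a - 1), sq_nonneg a]
  have hga : 0 < g - 1 := by linarith
  have haa : 0 < a - 1 := by linarith
  have hba : 0 < a ^ 4 - 1 := by linarith
  have hLM : γ * g / (4 * (g - 1)) ≤ α * a ^ 4 / (a ^ 4 - 1) := by
    rw [div_le_div_iff₀ (by positivity) hba]
    nlinarith [hkey]
  have hMR : α * a ^ 4 / (a ^ 4 - 1) ≤ α + α / (2 * (a - 1)) := by
    have hM : α * a ^ 4 / (a ^ 4 - 1) = α + α / (a ^ 4 - 1) := by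
      field_simp; ring
    rw [hM]
    have : α / (a ^ 4 - 1) ≤ α / (2 * (a - 1)) := by
      gcongr
    linarith
  have eqL : γ / 4 + γ / (4 * (g - 1)) = γ * g / (4 * (g - 1)) := by
    field_simp; ring
  have hfin : γ / 4 + γ / (4 * (g - 1)) ≤ α + α / (2 * (a - 1)) := by
    rw [eqL]; exact le_trans hLM hMR
  linarith
end

section
/- Let g, m, x, v ∈ ℝ^d with v > 0 entrywise, and let λ ≥ 0. Then ⟨g + λm, −m/√v − λx⟩ + ⟨m/√v + λx, g − m⟩ + ⟨−m²/(4v^{3/2}), g² − v⟩ = −(λ + 3/4)‖m²/√v‖₁ − λ(λ + 1)⟨m, x⟩ − (1/4)‖m² ⊙ g²/v^{3/2}‖₁. (This computes the derivative of H(x,m,v) = f(x) + ‖m²/(2√v)‖₁ + λ⟨m, x⟩ along the simplified continuous-time AdamW dynamics ẋ = −m/√v − λx, ṁ = ∇f(x) − m, v̇ = ∇f(x)² − v, with g = ∇f(x), exhibiting the sign-indefinite term −λ(λ+1)⟨m, x⟩.) -/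
/-! The identity holds coordinatewise. Expanding the three products, the cross terms `± g m / √v`
and `± λ g x` cancel, leaving `-(λ + 1) m² / √v - λ (λ + 1) m x` from the first two and
`-m² g² / (4 v √v) + v m² / (4 v √v)` from the third; since `v / (v √v) = 1 / √v` for `v ≠ 0`,
the last term turns `-(λ + 1)` into `-(λ + 3/4)`. -/

open Real

theorem adamw_lyapunov_derivative_coord (g m x v lam : ℝ) (hv : v ≠ 0) :
    (g + lam * m) * (-(m / √v) - lam * x) + (m / √v + lam * x) * (g - m)
        + (-(m ^ 2) / (4 * (v * √v))) * (g ^ 2 - v)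
      = -(lam + 3 / 4) * (m ^ 2 / √v) - lam * (lam + 1) * (m * x)
          - (1 / 4) * (m ^ 2 * g ^ 2 / (v * √v)) := by
  have hcancel : v / (v * √v) = (√v)⁻¹ := div_mul_cancel_left₀ hv _
  linear_combination (m ^ 2 / 4) * hcancel

theorem adamw_lyapunov_derivative_identity_general {d : ℕ} (g m x v : Fin d → ℝ)
    (hv : ∀ i, 0 < v i) (lam : ℝ) :
    (∑ i, (g i + lam * m i) * (-(m i / Real.sqrt (v i)) - lam * x i))
        + (∑ i, (m i / Real.sqrt (v i) + lam * x i) * (g i - m i))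
        + (∑ i, (-(m i ^ 2) / (4 * (v i * Real.sqrt (v i)))) * ((g i) ^ 2 - v i))
      = -(lam + 3 / 4) * (∑ i, (m i) ^ 2 / Real.sqrt (v i))
          - lam * (lam + 1) * (∑ i, m i * x i)
          - (1 / 4) * (∑ i, (m i) ^ 2 * (g i) ^ 2 / (v i * Real.sqrt (v i))) := by
  simp only [Finset.mul_sum, ← Finset.sum_add_distrib, ← Finset.sum_sub_distrib]
  exact Finset.sum_congr rfl fun i _ =>
    adamw_lyapunov_derivative_coord (g i) (m i) (x i) (v i) lam (hv i).ne'

/-- derivative identity for the candidate Lyapunov function of the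
simplified continuous-time AdamW dynamics, exhibiting the sign-indefinite term
`-λ(λ+1)⟨m, x⟩`. -/
theorem adamw_lyapunov_derivative_identity {d : ℕ} (g m x v : Fin d → ℝ)
    (hv : ∀ i, 0 < v i) (lam : ℝ) (hlam : 0 ≤ lam) :
    (∑ i, (g i + lam * m i) * (-(m i / Real.sqrt (v i)) - lam * x i))
        + (∑ i, (m i / Real.sqrt (v i) + lam * x i) * (g i - m i))
        + (∑ i, (-(m i ^ 2) / (4 * (v i * Real.sqrt (v i)))) * ((g i) ^ 2 - v i))
      = -(lam + 3 / 4) * (∑ i, (m i) ^ 2 / Real.sqrt (v i))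
          - lam * (lam + 1) * (∑ i, m i * x i)
          - (1 / 4) * (∑ i, (m i) ^ 2 * (g i) ^ 2 / (v i * Real.sqrt (v i))) :=
  adamw_lyapunov_derivative_identity_general g m x v hv lam
end

section
/- Let λ > 0 and let u, x ∈ ℝ^d satisfy, in every coordinate i, u_i = λ·𝕀(u_i x_i ≤ 0)·x_i. Then u = 0. In particular, at any fixed point x* of Lion-K with cautious weight decay, where the update direction stabilizes to u = ∇K(−∇f(x*)), one has ∇K(−∇f(x*)) = 0; if additionally K is a convex function whose unique minimizer of its subgradient-zero condition is 0 (e.g. a norm), this forces ∇f(x*) = 0. -/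
theorem eq_zero_of_eq_mul_ite_mul {R : Type*} [Ring R] [LinearOrder R] [IsStrictOrderedRing R]
    {lam a b : R} (hlam : 0 < lam) (h : a = lam * (if a * b ≤ 0 then 1 else 0) * b) : a = 0 := by
  split_ifs at h with hab
  · rw [mul_one] at h
    have hbb : b * b ≤ 0 := by
      rw [h, mul_assoc] at hab
      exact nonpos_of_mul_nonpos_right hab hlam
    rw [h, mul_self_eq_zero.mp (hbb.antisymm (mul_self_nonneg b)), mul_zero]
  · rwa [mul_zero, zero_mul] at h

/-- fixed points of Lion-K with cautious weight decay have zero update. -/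
theorem lionk_cwd_fixed_point {d : ℕ} (lam : ℝ) (hlam : 0 < lam) (u x : Fin d → ℝ)
    (h : ∀ i, u i = lam * (if u i * x i ≤ 0 then (1 : ℝ) else 0) * x i) :
    u = 0 :=
  funext fun i => eq_zero_of_eq_mul_ite_mul hlam (h i)
end
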